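/- arXiv:2208.02303 — 3 statements merged into one kernel-verified Lean document; each statement's English description precedes it below -/
import Mathlib

section
/- Let E be a Banach lattice. Assume (property (d)) that for every disjoint w*-null sequence (f_n) in E′ and every x ≥ 0 in E one has sup{ f_n(w) : |w| ≤ x } → 0, and assume (positive Grothendieck property) that every w*-null sequence of positive functionals in E′ is weakly null. Then every disjoint w*-null sequence in E′ is weakly null (i.e., E has the disjoint Grothendieck property). -/
open Filter Topology

/-- Two continuous functionals `f, g` on a Banach lattice are disjoint
(`|f| ⊓ |g| = 0` in the dual lattice). -/
def DualDisjoint {E : Type*} [NormedAddCommGroup E] [Lattice E] [HasSolidNorm E]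
    [IsOrderedAddMonoid E] [NormedSpace ℝ E]
    (f g : E →L[ℝ] ℝ) : Prop :=
  ∀ x : E, 0 ≤ x → ∀ ε : ℝ, 0 < ε → ∃ u v : E, 0 ≤ u ∧ 0 ≤ v ∧ u + v = x ∧
    (∀ w : E, |w| ≤ u → |f w| ≤ ε) ∧ (∀ z : E, |z| ≤ v → |g z| ≤ ε)

/-!
For a functional `f`, the positive part `f⁺ x = sup {f w | 0 ≤ w ≤ x}` (for `x ≥ 0`) is additive
on the positive cone by the Riesz decomposition property, so it extends to a continuous linear
functional with `f⁺ ≥ 0` and `f⁺ - f ≥ 0`. As `f⁺ x ≤ sup {f w | |w| ≤ x}`, property (d) makes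
`(f_n⁺)` w*-null for a disjoint w*-null sequence `(f_n)`. Then `(f_n⁺)` and `(f_n⁺ - f_n)` are
w*-null sequences of positive functionals, hence weakly null, and so is their difference `f_n`.
-/

open Set
open scoped Pointwise

section LatticeOrderedGroup

variable {α β : Type*} [AddCommGroup α] [Lattice α] [IsOrderedAddMonoid α] [AddCommGroup β]

/-- Riesz decomposition, with witness `w = w ⊓ x + (w - w ⊓ x)`. -/
theorem Icc_zero_add_Icc_zero {x y : α} (hx : 0 ≤ x) (hy : 0 ≤ y) :
    Icc 0 x + Icc 0 y = Icc 0 (x + y) := by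
  refine Subset.antisymm ?_ fun w ⟨hw₀, hw⟩ => ?_
  · rintro _ ⟨u, ⟨hu₀, hux⟩, v, ⟨hv₀, hvy⟩, rfl⟩
    exact ⟨add_nonneg hu₀ hv₀, add_le_add hux hvy⟩
  · refine ⟨w ⊓ x, ⟨le_inf hw₀ hx, inf_le_right⟩, w - w ⊓ x, ⟨sub_nonneg.2 inf_le_left, ?_⟩,
      add_sub_cancel _ _⟩
    rw [sub_inf, sub_self]
    exact sup_le hy (sub_le_iff_le_add'.2 hw)

theorem map_posPart_sub_map_negPart_add {g : α → β}
    (hadd : ∀ x y, 0 ≤ x → 0 ≤ y → g (x + y) = g x + g y) (x y : α) :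
    g (x + y)⁺ - g (x + y)⁻ = (g x⁺ - g x⁻) + (g y⁺ - g y⁻) := by
  have key : (x + y)⁺ + (x⁻ + y⁻) = (x⁺ + y⁺) + (x + y)⁻ := by
    rw [← sub_eq_sub_iff_add_eq_add, posPart_sub_negPart, ← sub_add_sub_comm,
      posPart_sub_negPart, posPart_sub_negPart]
  have hg := congrArg g key
  rw [hadd _ _ (posPart_nonneg _) (add_nonneg (negPart_nonneg x) (negPart_nonneg y)),
    hadd _ _ (negPart_nonneg x) (negPart_nonneg y),
    hadd _ _ (add_nonneg (posPart_nonneg x) (posPart_nonneg y)) (negPart_nonneg _),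
    hadd _ _ (posPart_nonneg x) (posPart_nonneg y)] at hg
  rwa [sub_add_sub_comm, sub_eq_sub_iff_add_eq_add]

theorem tendsto_apply_of_forall_nonneg {G ι : Type*} [FunLike G α β] [AddMonoidHomClass G α β]
    [TopologicalSpace β] [IsTopologicalAddGroup β] {l : Filter ι} {g : ι → G}
    (h : ∀ x, 0 ≤ x → Tendsto (fun n => g n x) l (𝓝 0)) (x : α) :
    Tendsto (fun n => g n x) l (𝓝 0) := by
  simpa only [← map_sub, posPart_sub_negPart, sub_zero] using
    (h _ (posPart_nonneg x)).sub (h _ (negPart_nonneg x))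

end LatticeOrderedGroup

section NormedLattice

variable {E : Type*} [NormedAddCommGroup E] [Lattice E] [HasSolidNorm E] [IsOrderedAddMonoid E]

theorem norm_posPart_le (a : E) : ‖a⁺‖ ≤ ‖a‖ :=
  norm_le_norm_of_abs_le_abs <| by
    rw [abs_of_nonneg (posPart_nonneg a), ← posPart_add_negPart]
    exact le_add_of_nonneg_right (negPart_nonneg a)

theorem norm_negPart_le (a : E) : ‖a⁻‖ ≤ ‖a‖ :=
  norm_le_norm_of_abs_le_abs <| by
    rw [abs_of_nonneg (negPart_nonneg a), ← posPart_add_negPart]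
    exact le_add_of_nonneg_left (posPart_nonneg a)

end NormedLattice

namespace ContinuousLinearMap

variable {E : Type*} [NormedAddCommGroup E] [Lattice E] [NormedSpace ℝ E]

theorem abs_apply_le_of_abs_le [HasSolidNorm E] (f : E →L[ℝ] ℝ) {w x : E} (hwx : |w| ≤ x) :
    |f w| ≤ ‖f‖ * ‖x‖ :=
  (f.le_opNorm w).trans <| mul_le_mul_of_nonneg_left
    (norm_le_norm_of_abs_le_abs (hwx.trans (le_abs_self x))) (norm_nonneg f)

theorem bddAbove_setOf_abs_le [HasSolidNorm E] (f : E →L[ℝ] ℝ) (x : E) :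
    BddAbove {r : ℝ | ∃ w : E, |w| ≤ x ∧ r = f w} :=
  ⟨‖f‖ * ‖x‖, by
    rintro _ ⟨w, hwx, rfl⟩
    exact (le_abs_self _).trans (f.abs_apply_le_of_abs_le hwx)⟩

theorem image_Icc_zero_subset_setOf_abs_le [IsOrderedAddMonoid E] (f : E →L[ℝ] ℝ) (x : E) :
    f '' Icc 0 x ⊆ {r : ℝ | ∃ w : E, |w| ≤ x ∧ r = f w} := by
  rintro _ ⟨w, ⟨hw₀, hwx⟩, rfl⟩
  exact ⟨w, (abs_of_nonneg hw₀).trans_le hwx, rfl⟩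

variable [HasSolidNorm E] [IsOrderedAddMonoid E]

section Extension

variable {F : Type*} [NormedAddCommGroup F] [NormedSpace ℝ F]

noncomputable def ofAddOnNonneg (g : E → F)
    (hadd : ∀ x y, 0 ≤ x → 0 ≤ y → g (x + y) = g x + g y) (C : ℝ)
    (hbound : ∀ x, 0 ≤ x → ‖g x‖ ≤ C * ‖x‖) : E →L[ℝ] F :=
  let φ : E →+ F := AddMonoidHom.mk' (fun x => g x⁺ - g x⁻) (map_posPart_sub_map_negPart_add hadd)
  φ.toRealLinearMap <| AddMonoidHomClass.continuous_of_bound φ (2 * |C|) fun x => by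
    have hpart : ∀ y, 0 ≤ y → ‖y‖ ≤ ‖x‖ → ‖g y‖ ≤ |C| * ‖x‖ := fun y hy hyx =>
      (hbound y hy).trans (mul_le_mul (le_abs_self C) hyx (norm_nonneg y) (abs_nonneg C))
    calc ‖g x⁺ - g x⁻‖ ≤ ‖g x⁺‖ + ‖g x⁻‖ := norm_sub_le _ _
      _ ≤ |C| * ‖x‖ + |C| * ‖x‖ := add_le_add
          (hpart _ (posPart_nonneg x) (norm_posPart_le x))
          (hpart _ (negPart_nonneg x) (norm_negPart_le x))
      _ = 2 * |C| * ‖x‖ := by ring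

theorem ofAddOnNonneg_apply_of_nonneg {g : E → F}
    (hadd : ∀ x y, 0 ≤ x → 0 ≤ y → g (x + y) = g x + g y) (C : ℝ)
    (hbound : ∀ x, 0 ≤ x → ‖g x‖ ≤ C * ‖x‖) {x : E} (hx : 0 ≤ x) :
    ofAddOnNonneg g hadd C hbound x = g x := by
  have hg0 : g 0 = 0 := by simpa using hadd 0 0 le_rfl le_rfl
  simp [ofAddOnNonneg, AddMonoidHom.toRealLinearMap, posPart_eq_self.2 hx,
    negPart_eq_zero.2 hx, hg0]

end Extension

section PosPart

variable (f : E →L[ℝ] ℝ)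

theorem bddAbove_image_Icc_zero (x : E) : BddAbove (f '' Icc 0 x) :=
  (f.bddAbove_setOf_abs_le x).mono (f.image_Icc_zero_subset_setOf_abs_le x)

theorem sSup_image_Icc_zero_add {x y : E} (hx : 0 ≤ x) (hy : 0 ≤ y) :
    sSup (f '' Icc 0 (x + y)) = sSup (f '' Icc 0 x) + sSup (f '' Icc 0 y) := by
  rw [← Icc_zero_add_Icc_zero hx hy, image_add f,
    csSup_add ((nonempty_Icc.2 hx).image f) (f.bddAbove_image_Icc_zero x)
      ((nonempty_Icc.2 hy).image f) (f.bddAbove_image_Icc_zero y)]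

theorem sSup_image_Icc_zero_nonneg {x : E} (hx : 0 ≤ x) : 0 ≤ sSup (f '' Icc 0 x) :=
  le_csSup_of_le (f.bddAbove_image_Icc_zero x) ⟨0, ⟨le_rfl, hx⟩, rfl⟩ (by simp)

theorem norm_sSup_image_Icc_zero_le {x : E} (hx : 0 ≤ x) :
    ‖sSup (f '' Icc 0 x)‖ ≤ ‖f‖ * ‖x‖ := by
  rw [Real.norm_of_nonneg (f.sSup_image_Icc_zero_nonneg hx)]
  refine csSup_le ((nonempty_Icc.2 hx).image f) ?_
  rintro _ ⟨w, ⟨hw₀, hwx⟩, rfl⟩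
  exact (le_abs_self _).trans (f.abs_apply_le_of_abs_le ((abs_of_nonneg hw₀).trans_le hwx))

noncomputable def dualPosPart : E →L[ℝ] ℝ :=
  ofAddOnNonneg (fun x => sSup (f '' Icc 0 x)) (fun _ _ => f.sSup_image_Icc_zero_add) ‖f‖
    fun _ => f.norm_sSup_image_Icc_zero_le

theorem dualPosPart_apply_of_nonneg {x : E} (hx : 0 ≤ x) :
    f.dualPosPart x = sSup (f '' Icc 0 x) :=
  ofAddOnNonneg_apply_of_nonneg _ _ _ hx

theorem dualPosPart_nonneg {x : E} (hx : 0 ≤ x) : 0 ≤ f.dualPosPart x := by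
  rw [f.dualPosPart_apply_of_nonneg hx]
  exact f.sSup_image_Icc_zero_nonneg hx

theorem le_dualPosPart {x : E} (hx : 0 ≤ x) : f x ≤ f.dualPosPart x := by
  rw [f.dualPosPart_apply_of_nonneg hx]
  exact le_csSup (f.bddAbove_image_Icc_zero x) ⟨x, ⟨hx, le_rfl⟩, rfl⟩

theorem dualPosPart_le_sSup_setOf_abs_le {x : E} (hx : 0 ≤ x) :
    f.dualPosPart x ≤ sSup {r : ℝ | ∃ w : E, |w| ≤ x ∧ r = f w} := by
  rw [f.dualPosPart_apply_of_nonneg hx]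
  exact csSup_le_csSup (f.bddAbove_setOf_abs_le x) ((nonempty_Icc.2 hx).image f)
    (f.image_Icc_zero_subset_setOf_abs_le x)

end PosPart

end ContinuousLinearMap

theorem disjoint_grothendieck_of_d_and_positive_grothendieck_general
    {E : Type*} [NormedAddCommGroup E] [Lattice E] [HasSolidNorm E]
    [IsOrderedAddMonoid E] [NormedSpace ℝ E]
    -- property (d)
    (hd : ∀ f : ℕ → E →L[ℝ] ℝ,
      (∀ n m, n ≠ m → DualDisjoint (f n) (f m)) →
      (∀ x : E, Tendsto (fun n => f n x) atTop (𝓝 0)) →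
      ∀ x : E, 0 ≤ x →
        Tendsto (fun n => sSup {r : ℝ | ∃ w : E, |w| ≤ x ∧ r = f n w}) atTop (𝓝 0))
    -- positive Grothendieck property
    (hPG : ∀ f : ℕ → E →L[ℝ] ℝ,
      (∀ n, ∀ x : E, 0 ≤ x → 0 ≤ f n x) →
      (∀ x : E, Tendsto (fun n => f n x) atTop (𝓝 0)) →
      ∀ Φ : (E →L[ℝ] ℝ) →L[ℝ] ℝ, Tendsto (fun n => Φ (f n)) atTop (𝓝 0)) :
    -- disjoint Grothendieck property
    ∀ f : ℕ → E →L[ℝ] ℝ,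
      (∀ n m, n ≠ m → DualDisjoint (f n) (f m)) →
      (∀ x : E, Tendsto (fun n => f n x) atTop (𝓝 0)) →
      ∀ Φ : (E →L[ℝ] ℝ) →L[ℝ] ℝ, Tendsto (fun n => Φ (f n)) atTop (𝓝 0) := by
  intro f hdisj hnull Φ
  have hpos_null : ∀ x, Tendsto (fun n => (f n).dualPosPart x) atTop (𝓝 0) :=
    tendsto_apply_of_forall_nonneg fun x hx =>
      squeeze_zero (fun n => (f n).dualPosPart_nonneg hx)
        (fun n => (f n).dualPosPart_le_sSup_setOf_abs_le hx) (hd f hdisj hnull x hx)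
  have hpos_weak := hPG (fun n => (f n).dualPosPart)
    (fun n _ hx => (f n).dualPosPart_nonneg hx) hpos_null Φ
  have hneg_weak := hPG (fun n => (f n).dualPosPart - f n)
    (fun n _ hx => sub_nonneg.2 ((f n).le_dualPosPart hx))
    (fun x => by simpa using (hpos_null x).sub (hnull x)) Φ
  simpa using hpos_weak.sub hneg_weak

/-- If a Banach lattice `E` has property (d) and the positive
Grothendieck property, then `E` has the disjoint Grothendieck property. -/
theorem disjoint_grothendieck_of_d_and_positive_grothendieck
    {E : Type*} [NormedAddCommGroup E] [Lattice E] [HasSolidNorm E]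
    [IsOrderedAddMonoid E] [NormedSpace ℝ E] [CompleteSpace E]
    -- property (d)
    (hd : ∀ f : ℕ → E →L[ℝ] ℝ,
      (∀ n m, n ≠ m → DualDisjoint (f n) (f m)) →
      (∀ x : E, Tendsto (fun n => f n x) atTop (𝓝 0)) →
      ∀ x : E, 0 ≤ x →
        Tendsto (fun n => sSup {r : ℝ | ∃ w : E, |w| ≤ x ∧ r = f n w}) atTop (𝓝 0))
    -- positive Grothendieck property
    (hPG : ∀ f : ℕ → E →L[ℝ] ℝ,
      (∀ n, ∀ x : E, 0 ≤ x → 0 ≤ f n x) →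
      (∀ x : E, Tendsto (fun n => f n x) atTop (𝓝 0)) →
      ∀ Φ : (E →L[ℝ] ℝ) →L[ℝ] ℝ, Tendsto (fun n => Φ (f n)) atTop (𝓝 0)) :
    -- disjoint Grothendieck property
    ∀ f : ℕ → E →L[ℝ] ℝ,
      (∀ n m, n ≠ m → DualDisjoint (f n) (f m)) →
      (∀ x : E, Tendsto (fun n => f n x) atTop (𝓝 0)) →
      ∀ Φ : (E →L[ℝ] ℝ) →L[ℝ] ℝ, Tendsto (fun n => Φ (f n)) atTop (𝓝 0) :=
  disjoint_grothendieck_of_d_and_positive_grothendieck_general hd hPG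
end

section
/- Let E, F be Banach lattices and T : E → F a continuous, interval preserving, order L-weakly compact operator. Then for every y ≥ 0 in the ideal of F generated by the range of T (i.e., such that y ≤ Σ_{i=1}^k |T y_i| for some finitely many y₁, …, y_k ∈ E), every disjoint sequence (x_n) in F with 0 ≤ x_n ≤ y for all n is norm null. (Consequently the norm closure of the ideal generated by T(E) is a Banach lattice with order continuous norm.) -/
open Filter Topology

/-- A norm-bounded set `L` in a Banach lattice is an LW-set if every disjoint
sequence in the solid hull of `L` is norm null. -/
def IsLWSet {F : Type*} [NormedAddCommGroup F] [Lattice F] [HasSolidNorm F] [IsOrderedAddMonoid F] (L : Set F) : Prop :=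
  Bornology.IsBounded L ∧
  ∀ y : ℕ → F, (∀ n, ∃ z ∈ L, |y n| ≤ |z|) →
    (∀ n m, n ≠ m → |y n| ⊓ |y m| = 0) →
    Tendsto (fun n => ‖y n‖) atTop (𝓝 0)

/-!
Dominate `y ≤ ∑ |T yᵢ|` by `T u` with `u = ∑ |yᵢ|`, using `|T v| ≤ T |v|` for positive `T`.
A disjoint sequence in `[0, y]` then lies in the solid hull of `T [0, u]`, which is an LW-set
because `T` is order L-weakly compact.
-/

section PositiveMap

variable {E F G : Type*} [AddCommGroup E] [Lattice E] [IsOrderedAddMonoid E]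
  [AddCommGroup F] [Lattice F] [IsOrderedAddMonoid F] [FunLike G E F] [AddMonoidHomClass G E F]

theorem abs_map_le_map_abs_of_nonneg {T : G} (hpos : ∀ x, 0 ≤ x → 0 ≤ T x) (v : E) :
    |T v| ≤ T |v| := by
  refine abs_le'.2 ⟨?_, ?_⟩
  · simpa [map_sub, sub_nonneg] using hpos (|v| - v) (sub_nonneg.2 (le_abs_self v))
  · have h := hpos (|v| + v) (by rw [← sub_neg_eq_add]; exact sub_nonneg.2 (neg_le_abs v))
    rwa [map_add, ← sub_neg_eq_add, sub_nonneg] at h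

theorem sum_abs_map_le_map_sum_abs {T : G} (hpos : ∀ x, 0 ≤ x → 0 ≤ T x) {ι : Type*}
    (s : Finset ι) (f : ι → E) : ∑ i ∈ s, |T (f i)| ≤ T (∑ i ∈ s, |f i|) := by
  rw [map_sum]
  exact Finset.sum_le_sum fun i _ => abs_map_le_map_abs_of_nonneg hpos (f i)

end PositiveMap

theorem disjoint_seq_norm_null_in_ideal_of_oLW_general
    {E F : Type*} [NormedAddCommGroup E] [Lattice E] [IsOrderedAddMonoid E] [NormedSpace ℝ E]
    [NormedAddCommGroup F] [Lattice F] [HasSolidNorm F] [IsOrderedAddMonoid F] [NormedSpace ℝ F]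
    (T : E →L[ℝ] F)
    -- T is positive
    (hpos : ∀ x : E, 0 ≤ x → 0 ≤ T x)
    -- T is order L-weakly compact
    (hoLW : ∀ A : Set E, (∃ a b : E, A ⊆ Set.Icc a b) → IsLWSet (T '' A)) :
    ∀ y : F, 0 ≤ y →
      (∃ (k : ℕ) (ys : Fin k → E), y ≤ ∑ i, |T (ys i)|) →
      ∀ x : ℕ → F, (∀ n, 0 ≤ x n ∧ x n ≤ y) →
        (∀ n m, n ≠ m → |x n| ⊓ |x m| = 0) →
        Tendsto (fun n => ‖x n‖) atTop (𝓝 0) := by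
  rintro y - ⟨k, ys, hys⟩ x hx hdisj
  set u : E := ∑ i, |ys i|
  have hu : 0 ≤ u := Finset.sum_nonneg fun i _ => abs_nonneg (ys i)
  have hyTu : y ≤ T u := hys.trans (sum_abs_map_le_map_sum_abs hpos _ ys)
  have hx_le : ∀ n, |x n| ≤ |T u| := fun n => by
    rw [abs_of_nonneg (hx n).1]
    exact ((hx n).2.trans hyTu).trans (le_abs_self _)
  exact (hoLW (Set.Icc 0 u) ⟨0, u, subset_rfl⟩).2 x
    (fun n => ⟨T u, ⟨u, ⟨hu, le_rfl⟩, rfl⟩, hx_le n⟩) hdisj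

/-- If `T : E → F` is a continuous, interval preserving, order
L-weakly compact operator between Banach lattices, then for every `y ≥ 0` in the
ideal of `F` generated by the range of `T`, every disjoint sequence in `[0, y]`
is norm null. -/
theorem disjoint_seq_norm_null_in_ideal_of_oLW
    {E F : Type*} [NormedAddCommGroup E] [Lattice E] [HasSolidNorm E] [IsOrderedAddMonoid E] [NormedSpace ℝ E] [CompleteSpace E]
    [NormedAddCommGroup F] [Lattice F] [HasSolidNorm F] [IsOrderedAddMonoid F] [NormedSpace ℝ F] [CompleteSpace F]
    (T : E →L[ℝ] F)
    -- T is positive and interval preserving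
    (hpos : ∀ x : E, 0 ≤ x → 0 ≤ T x)
    (hip : ∀ x : E, 0 ≤ x → T '' Set.Icc 0 x = Set.Icc 0 (T x))
    -- T is order L-weakly compact
    (hoLW : ∀ A : Set E, (∃ a b : E, A ⊆ Set.Icc a b) → IsLWSet (T '' A)) :
    ∀ y : F, 0 ≤ y →
      (∃ (k : ℕ) (ys : Fin k → E), y ≤ ∑ i, |T (ys i)|) →
      ∀ x : ℕ → F, (∀ n, 0 ≤ x n ∧ x n ≤ y) →
        (∀ n m, n ≠ m → |x n| ⊓ |x m| = 0) →
        Tendsto (fun n => ‖x n‖) atTop (𝓝 0) :=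
  disjoint_seq_norm_null_in_ideal_of_oLW_general T hpos hoLW
end

section
/- Let E, F be Banach lattices and 𝒫 a linear subspace of the space L(E,F) of continuous linear operators that is closed with respect to the operator norm. If (T_n) is a sequence of regularly-𝒫 operators that is Cauchy with respect to the enveloping norm ‖T‖_{r-𝒫} = inf{ ‖S‖ : S ∈ 𝒫, −S ≤ T ≤ S }, then there exists a regularly-𝒫 operator T with ‖T − T_n‖_{r-𝒫} → 0; that is, r-𝒫(E,F) is a Banach space under the enveloping norm. -/
/-!
Every regularly-`𝒫` operator `T` lies in `𝒫` and is dominated, `-S ≤ T ≤ S`, by some `S ∈ 𝒫`;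
a dominating `S` satisfies `‖T‖ ≤ ‖S‖`. Pass to a subsequence `A k = T (φ k)` whose consecutive
differences are dominated by `D k ∈ 𝒫` with `‖D k‖ < 2⁻ᵏ`. Then `A` is Cauchy in operator norm,
so it has a limit `L ∈ 𝒫`, and since domination is a closed condition, `L - A k` is dominated by
the tail `∑_{j ≥ k} D j`, which lies in `𝒫` and has small norm. This makes `L` regularly-`𝒫` and
gives `‖L - A k‖_{r-𝒫} → 0`; the Cauchy property then carries this to the whole sequence.
-/

open Filter Topology

section EnvelopingNorm

variable {E F : Type*} [NormedAddCommGroup E] [Lattice E] [HasSolidNorm E]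
  [IsOrderedAddMonoid E] [NormedSpace ℝ E]
  [NormedAddCommGroup F] [Lattice F] [HasSolidNorm F]
  [IsOrderedAddMonoid F] [NormedSpace ℝ F]

/-- `S` dominates `±T`, i.e. `-S ≤ T ≤ S` in the operator order. -/
def OpDominates (S T : E →L[ℝ] F) : Prop :=
  ∀ x : E, 0 ≤ x → -(S x) ≤ T x ∧ T x ≤ S x

/-- A positive operator. -/
def IsPositiveOp (T : E →L[ℝ] F) : Prop :=
  ∀ x : E, 0 ≤ x → 0 ≤ T x

/-- `T` is a regularly-`𝒫` operator: a difference of two positive members of `𝒫`. -/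
def IsRegP (P : Set (E →L[ℝ] F)) (T : E →L[ℝ] F) : Prop :=
  ∃ T₁ T₂ : E →L[ℝ] F, T₁ ∈ P ∧ T₂ ∈ P ∧ IsPositiveOp T₁ ∧ IsPositiveOp T₂ ∧ T = T₁ - T₂

/-- The enveloping norm `‖T‖_{r-𝒫} = inf{‖S‖ : S ∈ 𝒫, ±T ≤ S}`. -/
noncomputable def envNorm (P : Set (E →L[ℝ] F)) (T : E →L[ℝ] F) : ℝ :=
  sInf {r : ℝ | ∃ S ∈ P, OpDominates S T ∧ r = ‖S‖}

end EnvelopingNorm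

theorem exists_strictMono_forall_ge_lt {d : ℕ → ℕ → ℝ}
    (hd : ∀ ε : ℝ, 0 < ε → ∃ N : ℕ, ∀ m ≥ N, ∀ n ≥ N, d m n < ε) {ε : ℕ → ℝ}
    (hε : ∀ k, 0 < ε k) : ∃ φ : ℕ → ℕ, StrictMono φ ∧ ∀ k, ∀ m ≥ φ k, ∀ n ≥ φ k, d m n < ε k :=
  extraction_forall_of_eventually' fun k => by
    obtain ⟨N, hN⟩ := hd (ε k) (hε k)
    exact ⟨N, fun j hj m hm n hn => hN m (hj.trans hm) n (hj.trans hn)⟩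

theorem tendsto_nhds_zero_of_forall_eventually_le {f b : ℕ → ℝ} (hf : ∀ m, 0 ≤ f m)
    (hb : Tendsto b atTop (𝓝 0)) (h : ∀ k, ∀ᶠ m in atTop, f m ≤ b k) :
    Tendsto f atTop (𝓝 0) := by
  refine tendsto_order.2 ⟨fun a ha => .of_forall fun m => ha.trans_le (hf m), fun a ha => ?_⟩
  obtain ⟨k, hk⟩ := (hb.eventually (gt_mem_nhds ha)).exists
  exact (h k).mono fun m hm => hm.trans_lt hk

section RegularlyP

variable {E F : Type*} [NormedAddCommGroup E] [Lattice E] [NormedSpace ℝ E]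
  [NormedAddCommGroup F] [Lattice F] [NormedSpace ℝ F]

namespace OpDominates

variable [IsOrderedAddMonoid F] {S T S₁ S₂ T₁ T₂ : E →L[ℝ] F}

theorem isPositiveOp (h : OpDominates S T) : IsPositiveOp S := fun x hx =>
  calc (0 : F) ≤ |S x| := abs_nonneg _
    _ = S x := sup_eq_left.2 ((h x hx).1.trans (h x hx).2)

theorem add (h₁ : OpDominates S₁ T₁) (h₂ : OpDominates S₂ T₂) :
    OpDominates (S₁ + S₂) (T₁ + T₂) := fun x hx => by
  simp only [add_apply, neg_add]
  exact ⟨add_le_add (h₁ x hx).1 (h₂ x hx).1, add_le_add (h₁ x hx).2 (h₂ x hx).2⟩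

theorem neg (h : OpDominates S T) : OpDominates S (-T) := fun x hx => by
  simp only [neg_apply, neg_le_neg_iff, neg_le]
  exact (h x hx).symm

theorem sub (h₁ : OpDominates S₁ T₁) (h₂ : OpDominates S₂ T₂) :
    OpDominates (S₁ + S₂) (T₁ - T₂) := by
  simpa only [sub_eq_add_neg] using h₁.add h₂.neg

theorem sum {ι : Type*} (s : Finset ι) {S T : ι → E →L[ℝ] F}
    (h : ∀ i ∈ s, OpDominates (S i) (T i)) :
    OpDominates (∑ i ∈ s, S i) (∑ i ∈ s, T i) := by
  classical
  induction s using Finset.induction_on with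
  | empty => exact fun _ _ => by simp
  | insert i s hi ih =>
    rw [Finset.sum_insert hi, Finset.sum_insert hi]
    exact (h i (s.mem_insert_self i)).add (ih fun j hj => h j (Finset.mem_insert_of_mem hj))

theorem abs_apply_le [IsOrderedAddMonoid E] (h : OpDominates S T) (x : E) : |T x| ≤ S |x| := by
  have hpos := h (x⁺) (posPart_nonneg x)
  have hneg := h (x⁻) (negPart_nonneg x)
  have hT : T x = T x⁺ - T x⁻ := by rw [← map_sub, posPart_sub_negPart]
  have hS : S |x| = S x⁺ + S x⁻ := by rw [← map_add, posPart_add_negPart]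
  rw [hT, hS]
  refine abs_le'.2 ⟨?_, ?_⟩
  · rw [sub_eq_add_neg]
    exact add_le_add hpos.2 (neg_le.1 hneg.1)
  · rw [neg_sub, sub_eq_add_neg, add_comm (S x⁺)]
    exact add_le_add hneg.2 (neg_le.1 hpos.1)

theorem norm_le [HasSolidNorm E] [IsOrderedAddMonoid E] [HasSolidNorm F] (h : OpDominates S T) :
    ‖T‖ ≤ ‖S‖ := by
  refine T.opNorm_le_bound (norm_nonneg S) fun x => ?_
  calc ‖T x‖ ≤ ‖S |x|‖ := by
        apply norm_le_norm_of_abs_le_abs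
        rw [abs_of_nonneg (h.isPositiveOp _ (abs_nonneg x))]
        exact h.abs_apply_le x
    _ ≤ ‖S‖ * ‖|x|‖ := S.le_opNorm _
    _ = ‖S‖ * ‖x‖ := by rw [norm_abs_eq_norm]

theorem isClosed_setOf [HasSolidNorm F] :
    IsClosed {p : (E →L[ℝ] F) × (E →L[ℝ] F) | OpDominates p.1 p.2} := by
  simp only [OpDominates, Set.ofPred_forall, Set.ofPred_and]
  refine isClosed_iInter fun x => isClosed_iInter fun _ => ?_
  have h₁ : Continuous fun p : (E →L[ℝ] F) × (E →L[ℝ] F) => p.1 x :=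
    (continuous_eval_const x).comp continuous_fst
  have h₂ : Continuous fun p : (E →L[ℝ] F) × (E →L[ℝ] F) => p.2 x :=
    (continuous_eval_const x).comp continuous_snd
  exact (isClosed_le h₁.neg h₂).inter (isClosed_le h₂ h₁)

theorem of_tendsto [HasSolidNorm F] {ι : Type*} {l : Filter ι} [l.NeBot] {S T : ι → E →L[ℝ] F}
    {S' T' : E →L[ℝ] F} (hS : Tendsto S l (𝓝 S')) (hT : Tendsto T l (𝓝 T'))
    (h : ∀ᶠ i in l, OpDominates (S i) (T i)) : OpDominates S' T' :=
  isClosed_setOf.mem_of_tendsto (hS.prodMk_nhds hT) h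

theorem tsum_of_tendsto [HasSolidNorm F] {S T : ℕ → E →L[ℝ] F} {L : E →L[ℝ] F} (hS : Summable S)
    (hT : Tendsto T atTop (𝓝 L)) (h : ∀ j, OpDominates (S j) (T (j + 1) - T j)) :
    OpDominates (∑' j, S j) (L - T 0) :=
  of_tendsto hS.hasSum.tendsto_sum_nat (hT.sub_const (T 0)) <| .of_forall fun m => by
    simpa only [Finset.sum_range_sub] using sum (Finset.range m) fun j _ => h j

end OpDominates

theorem envNorm_nonneg (P : Set (E →L[ℝ] F)) (T : E →L[ℝ] F) : 0 ≤ envNorm P T :=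
  Real.sInf_nonneg fun _ ⟨S, _, _, hr⟩ => hr ▸ norm_nonneg S

theorem envNorm_le_norm {P : Set (E →L[ℝ] F)} {S T : E →L[ℝ] F} (hS : S ∈ P)
    (h : OpDominates S T) : envNorm P T ≤ ‖S‖ :=
  csInf_le ⟨0, fun _ ⟨S, _, _, hr⟩ => hr ▸ norm_nonneg S⟩ ⟨S, hS, h, rfl⟩

theorem exists_opDominates_norm_lt {P : Set (E →L[ℝ] F)} {T : E →L[ℝ] F} {r : ℝ}
    (hT : ∃ S ∈ P, OpDominates S T) (hr : envNorm P T < r) :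
    ∃ S ∈ P, OpDominates S T ∧ ‖S‖ < r := by
  obtain ⟨S, hS, h⟩ := hT
  obtain ⟨_, ⟨S', hS', h', rfl⟩, hlt⟩ := exists_lt_of_csInf_lt
    (s := {r : ℝ | ∃ S ∈ P, OpDominates S T ∧ r = ‖S‖}) ⟨‖S‖, S, hS, h, rfl⟩ hr
  exact ⟨S', hS', h', hlt⟩

theorem envNorm_add_le [IsOrderedAddMonoid F] {P : Submodule ℝ (E →L[ℝ] F)} {A B : E →L[ℝ] F}
    (hA : ∃ S ∈ P, OpDominates S A) (hB : ∃ S ∈ P, OpDominates S B) :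
    envNorm P (A + B) ≤ envNorm P A + envNorm P B := by
  refine le_of_forall_pos_lt_add fun ε hε => ?_
  obtain ⟨S₁, hS₁, h₁, hn₁⟩ := exists_opDominates_norm_lt hA (lt_add_of_pos_right _ (half_pos hε))
  obtain ⟨S₂, hS₂, h₂, hn₂⟩ := exists_opDominates_norm_lt hB (lt_add_of_pos_right _ (half_pos hε))
  calc envNorm P (A + B) ≤ ‖S₁ + S₂‖ := envNorm_le_norm (P.add_mem hS₁ hS₂) (h₁.add h₂)
    _ ≤ ‖S₁‖ + ‖S₂‖ := norm_add_le _ _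
    _ < envNorm P A + envNorm P B + ε := by linarith

theorem isRegP_iff [IsOrderedAddMonoid F] {P : Submodule ℝ (E →L[ℝ] F)} {T : E →L[ℝ] F} :
    IsRegP P T ↔ T ∈ P ∧ ∃ S ∈ P, OpDominates S T := by
  constructor
  · rintro ⟨T₁, T₂, h₁, h₂, hp₁, hp₂, rfl⟩
    refine ⟨P.sub_mem h₁ h₂, T₁ + T₂, P.add_mem h₁ h₂, fun x hx => ?_⟩
    have h₁ := hp₁ x hx
    have h₂ := hp₂ x hx
    simp only [add_apply, neg_add, sub_eq_add_neg]
    exact ⟨add_le_add_left ((neg_nonpos.2 h₁).trans h₁) _,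
      add_le_add_right ((neg_nonpos.2 h₂).trans h₂) _⟩
  · rintro ⟨hT, S, hS, h⟩
    refine ⟨S + T, S, P.add_mem hS hT, hS, fun x hx => ?_, h.isPositiveOp, by abel⟩
    exact neg_le_iff_add_nonneg'.1 (h x hx).1

theorem exists_tendsto_opDominates_tsum [HasSolidNorm E] [IsOrderedAddMonoid E] [HasSolidNorm F]
    [IsOrderedAddMonoid F] [CompleteSpace F] {A D : ℕ → E →L[ℝ] F}
    (hD : Summable fun k => ‖D k‖) (h : ∀ k, OpDominates (D k) (A (k + 1) - A k)) :
    ∃ L, Tendsto A atTop (𝓝 L) ∧ ∀ k, OpDominates (∑' j, D (j + k)) (L - A k) := by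
  have hA : CauchySeq A := cauchySeq_of_summable_dist <|
    hD.of_nonneg_of_le (fun _ => dist_nonneg) fun k => by
      rw [dist_comm, dist_eq_norm]
      exact (h k).norm_le
  obtain ⟨L, hL⟩ := cauchySeq_tendsto_of_complete hA
  refine ⟨L, hL, fun k => ?_⟩
  have hshift : ∀ j, OpDominates (D (j + k)) (A (j + 1 + k) - A (j + k)) := fun j => by
    rw [add_right_comm]
    exact h (j + k)
  simpa only [zero_add] using OpDominates.tsum_of_tendsto (T := fun j => A (j + k))
    ((summable_nat_add_iff k).2 hD.of_norm) (hL.comp (tendsto_add_atTop_nat k)) hshift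

end RegularlyP

theorem regP_complete_under_envNorm_general
    {E F : Type*} [NormedAddCommGroup E] [Lattice E] [HasSolidNorm E]
  [IsOrderedAddMonoid E] [NormedSpace ℝ E]
    [NormedAddCommGroup F] [Lattice F] [HasSolidNorm F]
  [IsOrderedAddMonoid F] [NormedSpace ℝ F] [CompleteSpace F]
    (P : Submodule ℝ (E →L[ℝ] F)) (hP : IsClosed (P : Set (E →L[ℝ] F)))
    (T : ℕ → E →L[ℝ] F) (hT : ∀ n, IsRegP (P : Set (E →L[ℝ] F)) (T n))
    (hCauchy : ∀ ε : ℝ, 0 < ε → ∃ N : ℕ, ∀ m ≥ N, ∀ n ≥ N,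
      envNorm (P : Set (E →L[ℝ] F)) (T m - T n) < ε) :
    ∃ S : E →L[ℝ] F, IsRegP (P : Set (E →L[ℝ] F)) S ∧
      Tendsto (fun n => envNorm (P : Set (E →L[ℝ] F)) (S - T n)) atTop (𝓝 0) := by
  have hdom : ∀ m n, ∃ S ∈ P, OpDominates S (T m - T n) := fun m n => by
    obtain ⟨-, S₁, hS₁, h₁⟩ := isRegP_iff.1 (hT m)
    obtain ⟨-, S₂, hS₂, h₂⟩ := isRegP_iff.1 (hT n)
    exact ⟨S₁ + S₂, P.add_mem hS₁ hS₂, h₁.sub h₂⟩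
  obtain ⟨φ, hφ, hφCauchy⟩ :=
    exists_strictMono_forall_ge_lt hCauchy fun k => pow_pos (one_half_pos (α := ℝ)) k
  choose D hDP hD hDnorm using fun k => exists_opDominates_norm_lt (hdom (φ (k + 1)) (φ k))
    (hφCauchy k _ (hφ.monotone k.le_succ) _ le_rfl)
  obtain ⟨L, hL, hLD⟩ := exists_tendsto_opDominates_tsum (A := T ∘ φ)
    (summable_geometric_two.of_nonneg_of_le (fun _ => norm_nonneg _) fun k => (hDnorm k).le) hD
  have htailP : ∀ k, ∑' j, D (j + k) ∈ P := fun k => tsum_mem hP fun j => hDP _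
  have hLP : L ∈ P := hP.mem_of_tendsto hL (.of_forall fun k => (isRegP_iff.1 (hT _)).1)
  have hLreg : IsRegP P L := by
    obtain ⟨-, S₀, hS₀, h₀⟩ := isRegP_iff.1 (hT (φ 0))
    exact isRegP_iff.2 ⟨hLP, _, P.add_mem (htailP 0) hS₀, by simpa using (hLD 0).add h₀⟩
  have hbound : Tendsto (fun k => ‖∑' j, D (j + k)‖ + (1 / 2 : ℝ) ^ k) atTop (𝓝 0) := by
    simpa using (tendsto_sum_nat_add D).norm.add
      (tendsto_pow_atTop_nhds_zero_of_lt_one (by norm_num : (0 : ℝ) ≤ 1 / 2) (by norm_num))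
  refine ⟨L, hLreg, tendsto_nhds_zero_of_forall_eventually_le (fun _ => envNorm_nonneg _ _)
    hbound fun k => eventually_atTop.2 ⟨φ k, fun m hm => ?_⟩⟩
  calc envNorm P (L - T m) ≤ envNorm P (L - T (φ k)) + envNorm P (T (φ k) - T m) := by
        simpa using envNorm_add_le ⟨_, htailP k, hLD k⟩ (hdom (φ k) m)
    _ ≤ ‖∑' j, D (j + k)‖ + (1 / 2) ^ k :=
        add_le_add (envNorm_le_norm (htailP k) (hLD k)) (hφCauchy k _ le_rfl m hm).le

/-- If `𝒫` is an operator-norm-closed linear subspace of `L(E,F)`,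
then every sequence of regularly-`𝒫` operators that is Cauchy for the enveloping
norm converges, in the enveloping norm, to a regularly-`𝒫` operator; that is,
`r-𝒫(E,F)` is a Banach space under the enveloping norm. -/
theorem regP_complete_under_envNorm
    {E F : Type*} [NormedAddCommGroup E] [Lattice E] [HasSolidNorm E]
  [IsOrderedAddMonoid E] [NormedSpace ℝ E] [CompleteSpace E]
    [NormedAddCommGroup F] [Lattice F] [HasSolidNorm F]
  [IsOrderedAddMonoid F] [NormedSpace ℝ F] [CompleteSpace F]
    (P : Submodule ℝ (E →L[ℝ] F)) (hP : IsClosed (P : Set (E →L[ℝ] F)))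
    (T : ℕ → E →L[ℝ] F) (hT : ∀ n, IsRegP (P : Set (E →L[ℝ] F)) (T n))
    (hCauchy : ∀ ε : ℝ, 0 < ε → ∃ N : ℕ, ∀ m ≥ N, ∀ n ≥ N,
      envNorm (P : Set (E →L[ℝ] F)) (T m - T n) < ε) :
    ∃ S : E →L[ℝ] F, IsRegP (P : Set (E →L[ℝ] F)) S ∧
      Tendsto (fun n => envNorm (P : Set (E →L[ℝ] F)) (S - T n)) atTop (𝓝 0) :=
  regP_complete_under_envNorm_general P hP T hT hCauchy
end
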